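/- arXiv:2304.03996 — 3 statements merged into one kernel-verified Lean document; each statement's English description precedes it below -/
import Mathlib

section
/- If H shatters a mistake tree of depth m, then the contradiction graph G_m(H) contains a clique of size 2^m (namely, the 2^m datasets corresponding to the root-to-leaf paths of the shattered tree form a clique). Consequently LD(H) ≤ CD(H). -/
open MeasureTheory
open scoped ENNReal

namespace ContradictionGraph

variable {X : Type*}

/-- A hypothesis `h : X → Bool` is consistent with the dataset `S` of size `m` if it labels
every example in `S` correctly. -/
def Consistent (h : X → Bool) {m : ℕ} (S : Fin m → X × Bool) : Prop :=
  ∀ i, h (S i).1 = (S i).2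

/-- A dataset `S` is realizable by the concept class `H` if some hypothesis in `H` is
consistent with it. -/
def Realizable (H : Set (X → Bool)) {m : ℕ} (S : Fin m → X × Bool) : Prop :=
  ∃ h ∈ H, Consistent h S

/-- Two datasets contradict each other if there is a point `x` such that one of them contains
the labeled example `(x, 0)` and the other contains `(x, 1)`. -/
def Contradicts {m : ℕ} (S S' : Fin m → X × Bool) : Prop :=
  ∃ x : X, ((∃ i, S i = (x, false)) ∧ (∃ j, S' j = (x, true))) ∨
    ((∃ i, S i = (x, true)) ∧ (∃ j, S' j = (x, false)))

/-- The vertex set of the contradiction graph `G_m(H)`: all `H`-realizable datasets of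
size `m`. -/
abbrev Vm (H : Set (X → Bool)) (m : ℕ) : Type _ :=
  {S : Fin m → X × Bool // Realizable H S}

/-- A clique in the contradiction graph `G_m(H)`: a set of vertices every two distinct members
of which contradict each other. -/
def IsClique (H : Set (X → Bool)) (m : ℕ) (C : Set (Vm H m)) : Prop :=
  ∀ S ∈ C, ∀ S' ∈ C, S ≠ S' → Contradicts S.1 S'.1

/-- An independent set in the contradiction graph `G_m(H)`: a set of vertices no two of which
are adjacent (i.e. no two distinct members contradict each other). -/
def IsIndep (H : Set (X → Bool)) (m : ℕ) (I : Set (Vm H m)) : Prop :=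
  ∀ S ∈ I, ∀ S' ∈ I, S ≠ S' → ¬ Contradicts S.1 S'.1

/-- The clique number `ω_m` of `G_m(H)`: the supremum of the sizes of cliques (in `ℕ∞`). -/
noncomputable def cliqueNum (H : Set (X → Bool)) (m : ℕ) : ℕ∞ :=
  ⨆ (C : Set (Vm H m)) (_ : IsClique H m C), C.encard

/-- The clique dimension `CD(H) = sup { m : ω_m = 2^m } ∈ ℕ ∪ {∞}`. -/
noncomputable def cliqueDim (H : Set (X → Bool)) : ℕ∞ :=
  ⨆ (m : ℕ) (_ : cliqueNum H m = 2 ^ m), (m : ℕ∞)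

/-- A fractional clique of `G_m(H)`: a nonnegative weight function on the vertices such that
the total weight of every independent set is at most `1`. -/
def IsFracClique (H : Set (X → Bool)) (m : ℕ) (δ : Vm H m → ℝ≥0∞) : Prop :=
  ∀ I : Set (Vm H m), IsIndep H m I → ∑' S : I, δ S.1 ≤ 1

/-- The fractional clique number `ω*_m` of `G_m(H)`: the supremum of the sizes
`|δ| = Σ_S δ(S)` of fractional cliques. -/
noncomputable def fracCliqueNum (H : Set (X → Bool)) (m : ℕ) : ℝ≥0∞ :=
  ⨆ (δ : Vm H m → ℝ≥0∞) (_ : IsFracClique H m δ), ∑' S, δ S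

/-- The fractional clique dimension `CD*(H) = sup { m : ω*_m = 2^m } ∈ ℕ ∪ {∞}`. -/
noncomputable def fracCliqueDim (H : Set (X → Bool)) : ℕ∞ :=
  ⨆ (m : ℕ) (_ : fracCliqueNum H m = 2 ^ m), (m : ℕ∞)

end ContradictionGraph

namespace ContradictionGraph
variable {X : Type*}

/-- `H` shatters a mistake tree of depth `d`: there is an assignment of points of `X` to the
internal nodes of the complete binary tree of depth `d` (the point fed to branch `ε` at level
`i` depends only on the first `i` bits of `ε`) such that every root-to-leaf dataset is
realizable by `H`. -/
def ShattersTree (H : Set (X → Bool)) (d : ℕ) : Prop :=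
  ∃ t : (Fin d → Bool) → Fin d → X,
    (∀ ε ε' : Fin d → Bool, ∀ i : Fin d, (∀ j : Fin d, j < i → ε j = ε' j) → t ε i = t ε' i) ∧
    ∀ ε : Fin d → Bool, Realizable H (fun i => (t ε i, ε i))

/-- The Littlestone dimension `LD(H)`: the largest `d` such that `H` shatters a mistake tree of
depth `d` (equal to `∞` if `H` shatters arbitrarily deep trees). -/
noncomputable def littlestoneDim (H : Set (X → Bool)) : ℕ∞ :=
  ⨆ (d : ℕ) (_ : ShattersTree H d), (d : ℕ∞)

end ContradictionGraph

/-!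
The `2^m` branches of a shattered tree of depth `m` pairwise contradict each other: two distinct
branches agree up to the first level where they part, so they query the same point there and
label it differently.

Conversely, no clique of `G_m(H)` has more than `2^m` members. Fix a finite clique and the finite
set `P` of points it mentions. A realizable dataset of size `m` is consistent with at least a
`2^{-m}` fraction of the labelings of `P`, and contradicting datasets are consistent with disjoint
sets of labelings. Hence `ω_m ≤ 2^m`, with equality as soon as a tree of depth `m` is shattered.
-/

namespace ContradictionGraph

section

variable {X : Type*} {m : ℕ}

lemma Contradicts.not_consistent {S S' : Fin m → X × Bool} (hSS' : Contradicts S S')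
    {h : X → Bool} (hS : Consistent h S) : ¬ Consistent h S' := by
  intro hS'
  obtain ⟨x, ⟨⟨i, hi⟩, j, hj⟩ | ⟨⟨i, hi⟩, j, hj⟩⟩ := hSS' <;>
  · have := hS i
    have := hS' j
    simp_all

lemma contradicts_of_fst_eq_of_snd_ne {S S' : Fin m → X × Bool} {i j : Fin m}
    (hx : (S i).1 = (S' j).1) (hy : (S i).2 ≠ (S' j).2) : Contradicts S S' := by
  have hi : S i = ((S i).1, (S i).2) := rfl
  have hj : S' j = ((S i).1, !(S i).2) := Prod.ext hx.symm (Bool.eq_not_iff.mpr hy.symm)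
  refine ⟨(S i).1, ?_⟩
  cases hb : (S i).2 <;> rw [hb] at hi hj
  · exact Or.inl ⟨⟨i, hi⟩, j, hj⟩
  · exact Or.inr ⟨⟨i, hi⟩, j, hj⟩

lemma exists_first_ne {ι β : Type*} [LinearOrder ι] [WellFoundedLT ι] {f g : ι → β}
    (hfg : f ≠ g) : ∃ i, f i ≠ g i ∧ ∀ j < i, f j = g j := by
  obtain ⟨i, hi, hmin⟩ := wellFounded_lt.has_min {i | f i ≠ g i} (Function.ne_iff.mp hfg)
  exact ⟨i, hi, fun j hj => by_contra fun hne => hmin j hne hj⟩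

theorem ShattersTree.exists_clique {H : Set (X → Bool)} (hs : ShattersTree H m) :
    ∃ C : Set (Vm H m), IsClique H m C ∧ C.encard = 2 ^ m := by
  obtain ⟨t, ht, hreal⟩ := hs
  let branch : (Fin m → Bool) → Vm H m := fun ε => ⟨fun i => (t ε i, ε i), hreal ε⟩
  have hinj : branch.Injective := fun ε ε' h =>
    funext fun i => congrArg Prod.snd (congrFun (congrArg Subtype.val h) i)
  refine ⟨Set.range branch, ?_, ?_⟩
  · rintro _ ⟨ε, rfl⟩ _ ⟨ε', rfl⟩ hne
    obtain ⟨i, hi, hprefix⟩ := exists_first_ne (mt (congrArg branch) hne)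
    exact contradicts_of_fst_eq_of_snd_ne (i := i) (j := i) (ht ε ε' i hprefix) hi
  · rw [← Set.image_univ, hinj.injOn.encard_image, Set.encard_univ, ENat.card_eq_coe_fintype_card,
      Fintype.card_fun, Fintype.card_bool, Fintype.card_fin]
    norm_cast

section Counting

variable [DecidableEq X]

def points (S : Fin m → X × Bool) : Finset X :=
  Finset.univ.image fun i => (S i).1

/-- A labeling of a finite set of points `P` is encoded by the subset of `P` labeled `true`. -/
def consistentLabelings (P : Finset X) (S : Fin m → X × Bool) : Finset (Finset X) :=
  P.powerset.filter fun A => ∀ i, decide ((S i).1 ∈ A) = (S i).2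

lemma card_points_le (S : Fin m → X × Bool) : (points S).card ≤ m :=
  Finset.card_image_le.trans_eq (Finset.card_fin m)

lemma Contradicts.disjoint_consistentLabelings {S S' : Fin m → X × Bool}
    (hSS' : Contradicts S S') (P : Finset X) :
    Disjoint (consistentLabelings P S) (consistentLabelings P S') := by
  simp only [Finset.disjoint_left, consistentLabelings, Finset.mem_filter]
  exact fun A hA hA' => hSS'.not_consistent (h := (· ∈ A)) hA.2 hA'.2

lemma two_pow_card_le_mul_card_consistentLabelings {P : Finset X} {S : Fin m → X × Bool}
    {h : X → Bool} (hS : Consistent h S) (hP : points S ⊆ P) :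
    2 ^ P.card ≤ 2 ^ m * (consistentLabelings P S).card := by
  set Q := points S
  set T := Q.filter fun x => h x = true
  have hQ : ∀ i, (S i).1 ∈ Q := fun i => Finset.mem_image_of_mem _ (Finset.mem_univ i)
  -- a labeling consistent with `S` is free off the points of `S`
  have hmaps : ∀ B ∈ (P \ Q).powerset, T ∪ B ∈ consistentLabelings P S := by
    intro B hB
    rw [Finset.mem_powerset] at hB
    refine Finset.mem_filter.mpr ⟨?_, fun i => ?_⟩
    · exact Finset.mem_powerset.mpr <| Finset.union_subset
        ((Finset.filter_subset _ _).trans hP) (hB.trans Finset.sdiff_subset)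
    · have hB' : (S i).1 ∉ B := fun hx => (Finset.mem_sdiff.mp (hB hx)).2 (hQ i)
      simp [T, hQ i, hB', ← hS i]
  have hrecover : ∀ B ⊆ P \ Q, (T ∪ B) \ Q = B := fun B hB => by
    have hT : T ⊆ Q := Finset.filter_subset _ _
    grind
  have hinj : Set.InjOn (T ∪ ·) ((P \ Q).powerset : Set (Finset X)) := fun B hB B' hB' hBB' => by
    rw [Finset.coe_powerset, Set.mem_preimage, Set.mem_powerset_iff, Finset.coe_subset] at hB hB'
    rw [← hrecover B hB, ← hrecover B' hB']
    exact congrArg (· \ Q) hBB'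
  calc 2 ^ P.card ≤ 2 ^ ((P \ Q).card + Q.card) :=
        Nat.pow_le_pow_right two_pos Finset.card_le_card_sdiff_add_card
    _ ≤ 2 ^ m * 2 ^ (P \ Q).card := by
        rw [pow_add, mul_comm]
        exact Nat.mul_le_mul_right _ (Nat.pow_le_pow_right two_pos (card_points_le S))
    _ ≤ 2 ^ m * (consistentLabelings P S).card := by
        rw [← Finset.card_powerset]
        exact Nat.mul_le_mul_left _ (Finset.card_le_card_of_injOn _ hmaps hinj)

end Counting

lemma IsClique.finset_card_le {H : Set (X → Bool)} {C : Finset (Vm H m)}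
    (hC : IsClique H m C) : C.card ≤ 2 ^ m := by
  classical
  set P := C.biUnion fun S => points S.1
  let labelings : Vm H m → Finset (Finset X) := fun S => consistentLabelings P S.1
  have hdisj : (C : Set (Vm H m)).PairwiseDisjoint labelings := fun S hS S' hS' hne =>
    (hC S hS S' hS' hne).disjoint_consistentLabelings P
  have hlower : ∀ S ∈ C, 2 ^ P.card ≤ 2 ^ m * (labelings S).card := fun S hS => by
    obtain ⟨h, -, hh⟩ := S.2
    exact two_pow_card_le_mul_card_consistentLabelings hh
      (Finset.subset_biUnion_of_mem (fun S : Vm H m => points S.1) hS)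
  have hupper : (C.biUnion labelings).card ≤ 2 ^ P.card := by
    rw [← Finset.card_powerset]
    exact Finset.card_le_card (Finset.biUnion_subset.mpr fun S _ => Finset.filter_subset _ _)
  refine Nat.le_of_mul_le_mul_right ?_ (pow_pos two_pos P.card)
  calc C.card * 2 ^ P.card ≤ ∑ S ∈ C, 2 ^ m * (labelings S).card :=
        smul_eq_mul C.card _ ▸ Finset.card_nsmul_le_sum _ _ _ hlower
    _ = 2 ^ m * (C.biUnion labelings).card := by rw [Finset.card_biUnion hdisj, Finset.mul_sum]
    _ ≤ 2 ^ m * 2 ^ P.card := Nat.mul_le_mul_left _ hupper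

lemma IsClique.encard_le {H : Set (X → Bool)} {C : Set (Vm H m)} (hC : IsClique H m C) :
    C.encard ≤ 2 ^ m := by
  by_contra! hlt
  obtain ⟨t, htC, ht⟩ := Set.exists_subset_encard_eq (Order.add_one_le_of_lt hlt)
  have htfin : t.Finite := Set.finite_of_encard_eq_coe (k := 2 ^ m + 1) (by rw [ht]; norm_cast)
  obtain ⟨s, rfl⟩ := htfin.exists_finset_coe
  have hs : s.card ≤ 2 ^ m :=
    IsClique.finset_card_le fun S hS S' hS' => hC S (htC hS) S' (htC hS')
  rw [Set.encard_coe_eq_coe_finsetCard] at ht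
  have : s.card = 2 ^ m + 1 := by exact_mod_cast ht
  omega

lemma cliqueNum_le (H : Set (X → Bool)) (m : ℕ) : cliqueNum H m ≤ 2 ^ m :=
  iSup₂_le fun _ hC => hC.encard_le

lemma ShattersTree.cliqueNum_eq {H : Set (X → Bool)} (hs : ShattersTree H m) :
    cliqueNum H m = 2 ^ m := by
  obtain ⟨C, hC, hcard⟩ := hs.exists_clique
  exact (cliqueNum_le H m).antisymm (hcard ▸ le_iSup₂_of_le C hC le_rfl)

end

theorem shatters_implies_clique_and_LD_le_CD_general {X : Type*}
    (H : Set (X → Bool)) :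
    (∀ m : ℕ, ShattersTree H m →
      ∃ C : Set (Vm H m), IsClique H m C ∧ C.encard = 2 ^ m) ∧
    littlestoneDim H ≤ cliqueDim H :=
  ⟨fun _ hs => hs.exists_clique,
    iSup₂_le fun d hd => le_iSup₂_of_le (α := ℕ∞) d hd.cliqueNum_eq le_rfl⟩

/-- If `H` shatters a mistake tree of depth `m`, then the contradiction graph
`G_m(H)` contains a clique of size `2^m` (the `2^m` datasets corresponding to the
root-to-leaf paths of the shattered tree form a clique). Consequently `LD(H) ≤ CD(H)`. -/
theorem shatters_implies_clique_and_LD_le_CD {X : Type*} [Countable X]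
    (H : Set (X → Bool)) (hH : H.Nonempty) :
    (∀ m : ℕ, ShattersTree H m →
      ∃ C : Set (Vm H m), IsClique H m C ∧ C.encard = 2 ^ m) ∧
    littlestoneDim H ≤ cliqueDim H :=
  shatters_implies_clique_and_LD_le_CD_general H

end ContradictionGraph
end

section
/- If H has finite Littlestone dimension d = LD(H), then the clique dimension satisfies CD(H) ≤ max{ 2·d·log₂(d), 300 }. -/
open MeasureTheory
open scoped ENNReal

/-!
Let `F` be a clique of `N` pairwise contradicting datasets of size `m`. Every ordered pair of
distinct members contradicts at some point `x`; if at every point one of the labels `(x, 0)`,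
`(x, 1)` occurs in at most `t` members, such a point accounts for at most `2t` pairs per
occurrence, and there are only `mN` occurrences in all, so `N ≤ 2mt + 1`. Hence a larger clique
has a point `x` splitting it into two sub-cliques of size `> t`, those containing `(x, 0)` and
those containing `(x, 1)`. Recursing, a clique of size `(2m + 1)^k` yields a mistake tree of
depth `k` each branch of which lies inside a member of the clique and is therefore realizable.
So `ω_m = 2^m` forces `2^m < (2m + 1)^(LD(H) + 1)`, which a tangent-line estimate for `log`
rules out once `m > max (2 d log₂ d) 300`.
-/

namespace ContradictionGraph

open Finset Real

section Trees

variable {X : Type*} {k : ℕ}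

theorem contradicts_iff {m : ℕ} {S S' : Fin m → X × Bool} :
    Contradicts S S' ↔ ∃ x b, (∃ i, S i = (x, b)) ∧ ∃ j, S' j = (x, !b) := by
  simp only [Contradicts, Bool.exists_bool, Bool.not_false, Bool.not_true, or_comm]

theorem Realizable.mono {H : Set (X → Bool)} {m n : ℕ} {S : Fin m → X × Bool}
    {T : Fin n → X × Bool} (hS : Realizable H S) (hTS : Set.range T ⊆ Set.range S) :
    Realizable H T := by
  obtain ⟨h, hH, hh⟩ := hS
  refine ⟨h, hH, fun i => ?_⟩
  obtain ⟨j, hj⟩ := hTS ⟨i, rfl⟩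
  rw [← hj]
  exact hh j

def IsMistakeTree (t : (Fin k → Bool) → Fin k → X) : Prop :=
  ∀ ε ε' : Fin k → Bool, ∀ i : Fin k, (∀ j < i, ε j = ε' j) → t ε i = t ε' i

def branch (t : (Fin k → Bool) → Fin k → X) (ε : Fin k → Bool) :
    Fin k → X × Bool :=
  fun i => (t ε i, ε i)

def node (x : X) (t : Bool → (Fin k → Bool) → Fin k → X) :
    (Fin (k + 1) → Bool) → Fin (k + 1) → X :=
  fun ε => Fin.cons x (t (ε 0) (Fin.tail ε))

theorem isMistakeTree_node (x : X) {t : Bool → (Fin k → Bool) → Fin k → X}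
    (ht : ∀ b, IsMistakeTree (t b)) : IsMistakeTree (node x t) := by
  intro ε ε' i hεε'
  induction i using Fin.cases with
  | zero => rfl
  | succ i =>
    have hroot : ε 0 = ε' 0 := hεε' 0 (Fin.succ_pos i)
    simp only [node, Fin.cons_succ, hroot]
    exact ht _ _ _ i fun j hj => hεε' j.succ (Fin.succ_lt_succ_iff.mpr hj)

theorem range_branch_node (x : X) (t : Bool → (Fin k → Bool) → Fin k → X)
    (ε : Fin (k + 1) → Bool) :
    Set.range (branch (node x t) ε) =
      insert (x, ε 0) (Set.range (branch (t (ε 0)) (Fin.tail ε))) := by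
  rw [Fin.range_fin_succ]
  rfl

end Trees

section Counting

variable {X : Type*} [DecidableEq X] {m : ℕ}

def withExample (F : Finset (Fin m → X × Bool)) (p : X × Bool) : Finset (Fin m → X × Bool) :=
  {S ∈ F | ∃ j, S j = p}

theorem mem_withExample {F : Finset (Fin m → X × Bool)} {p : X × Bool}
    {S : Fin m → X × Bool} :
    S ∈ withExample F p ↔ S ∈ F ∧ p ∈ Set.range S :=
  mem_filter

theorem sum_card_withExample_le (F : Finset (Fin m → X × Bool)) (Q : Finset (X × Bool)) :
    ∑ p ∈ Q, #(withExample F p) ≤ m * #F := by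
  calc ∑ p ∈ Q, #(withExample F p) = ∑ S ∈ F, #{p ∈ Q | ∃ j, S j = p} := by
        simp only [withExample, card_filter]
        exact sum_comm
    _ ≤ ∑ _S ∈ F, m := sum_le_sum fun S _ => by
        calc #{p ∈ Q | ∃ j, S j = p} ≤ #(univ.image S) := card_le_card fun p hp => by
              simpa using (mem_filter.mp hp).2
          _ ≤ m := card_image_le.trans_eq (card_fin m)
    _ = m * #F := by rw [sum_const, smul_eq_mul, mul_comm]

theorem exists_lt_card_withExample {F : Finset (Fin m → X × Bool)}
    (hF : (F : Set (Fin m → X × Bool)).Pairwise Contradicts) {t : ℕ}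
    (hcard : 2 * m * t + 1 < #F) : ∃ x, ∀ b, t < #(withExample F (x, b)) := by
  by_contra! hsmall
  set a : X → Bool → ℕ := fun x b => #(withExample F (x, b)) with ha
  let P : Finset X := F.biUnion fun S => univ.image fun j => (S j).1
  have hpairs : #F * #F - #F ≤ ∑ x ∈ P, ∑ b, a x b * a x (!b) := by
    rw [← offDiag_card]
    calc #F.offDiag
        ≤ #(P.biUnion fun x =>
            univ.biUnion fun b => withExample F (x, b) ×ˢ withExample F (x, !b)) := by
          refine card_le_card fun ⟨S, S'⟩ hSS' => ?_
          obtain ⟨hS, hS', hne⟩ := mem_offDiag.mp hSS'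
          obtain ⟨x, b, ⟨i, hi⟩, hj⟩ := contradicts_iff.mp (hF hS hS' hne)
          have hxP : x ∈ P :=
            mem_biUnion.mpr ⟨S, hS, mem_image.mpr ⟨i, mem_univ _, congrArg Prod.fst hi⟩⟩
          simp only [mem_biUnion, mem_univ, mem_product, mem_withExample, true_and]
          exact ⟨x, hxP, b, ⟨hS, i, hi⟩, hS', hj⟩
      _ ≤ ∑ x ∈ P, ∑ b, a x b * a x (!b) :=
          card_biUnion_le.trans <| sum_le_sum fun x _ =>
            card_biUnion_le.trans_eq <| by simp only [card_product, ha]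
  have hpoint : ∀ x, ∑ b, a x b * a x (!b) ≤ 2 * t * ∑ b, a x b := by
    intro x
    obtain ⟨b, hb⟩ := hsmall x
    cases b <;> simp only [Fintype.sum_bool, Bool.not_true, Bool.not_false] at hb ⊢ <;> nlinarith
  have hlabels : ∑ x ∈ P, ∑ b, a x b ≤ m * #F := by
    rw [← sum_product (s := P) (t := univ) (f := fun p => #(withExample F p))]
    exact sum_card_withExample_le F _
  have : #F * #F - #F ≤ 2 * t * (m * #F) :=
    hpairs.trans <| (sum_le_sum fun x _ => hpoint x).trans <| by
      rw [← mul_sum]; exact Nat.mul_le_mul_left _ hlabels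
  have : #F * #F ≤ (2 * m * t + 1) * #F := by
    rw [Nat.sub_le_iff_le_add] at this; nlinarith
  nlinarith [Nat.mul_le_mul_right #F hcard]

end Counting

section Shattering

variable {X : Type*} {H : Set (X → Bool)} {m k : ℕ}

theorem exists_isMistakeTree_of_pairwise_contradicts [DecidableEq X] (hm : 0 < m)
    {F : Finset (Fin m → X × Bool)} (hF : (F : Set (Fin m → X × Bool)).Pairwise Contradicts)
    (hcard : (2 * m + 1) ^ k ≤ #F) :
    ∃ t : (Fin k → Bool) → Fin k → X,
      IsMistakeTree t ∧ ∀ ε, ∃ S ∈ F, Set.range (branch t ε) ⊆ Set.range S := by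
  induction k generalizing F with
  | zero =>
    obtain ⟨S, hS⟩ := card_pos.mp (by simpa using hcard)
    exact ⟨fun _ => Fin.elim0, fun _ _ i => i.elim0, fun _ => ⟨S, hS, by simp⟩⟩
  | succ k ih =>
    have hpos : 0 < (2 * m + 1) ^ k := by positivity
    have hsplit : 2 * m * ((2 * m + 1) ^ k - 1) + 1 < #F := by
      rw [pow_succ] at hcard
      zify [hpos] at hcard ⊢
      nlinarith
    obtain ⟨x, hx⟩ := exists_lt_card_withExample hF hsplit
    choose t ht hleaf using fun b =>
      ih (Set.Pairwise.mono (coe_subset.mpr (filter_subset _ _)) hF)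
        (Nat.le_of_pred_lt (hx b))
    refine ⟨node x t, isMistakeTree_node x ht, fun ε => ?_⟩
    obtain ⟨S, hS, hsub⟩ := hleaf (ε 0) (Fin.tail ε)
    obtain ⟨hSF, hxS⟩ := mem_withExample.mp hS
    rw [range_branch_node]
    exact ⟨S, hSF, Set.insert_subset hxS hsub⟩

theorem shattersTree_of_pairwise_contradicts (hm : 0 < m) {F : Finset (Fin m → X × Bool)}
    (hreal : ∀ S ∈ F, Realizable H S)
    (hF : (F : Set (Fin m → X × Bool)).Pairwise Contradicts) (hcard : (2 * m + 1) ^ k ≤ #F) :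
    ShattersTree H k := by
  classical
  obtain ⟨t, ht, hleaf⟩ := exists_isMistakeTree_of_pairwise_contradicts hm hF hcard
  refine ⟨t, ht, fun ε => ?_⟩
  obtain ⟨S, hS, hsub⟩ := hleaf ε
  exact (hreal S hS).mono hsub

theorem encard_lt_of_isClique (hm : 0 < m) (hk : ¬ ShattersTree H k) {C : Set (Vm H m)}
    (hC : IsClique H m C) : C.encard < ((2 * m + 1) ^ k : ℕ) := by
  by_contra! hle
  obtain ⟨D, hDC, hD⟩ := Set.exists_subset_encard_eq hle
  have hDfin := Set.finite_of_encard_eq_coe hD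
  refine hk (shattersTree_of_pairwise_contradicts hm
    (F := hDfin.toFinset.map (Function.Embedding.subtype _)) ?_ ?_ ?_)
  · simp only [mem_map, Set.Finite.mem_toFinset, Function.Embedding.subtype_apply]
    rintro _ ⟨v, -, rfl⟩
    exact v.2
  · simp only [coe_map, Set.Finite.coe_toFinset, Function.Embedding.subtype_apply]
    rintro _ ⟨v, hv, rfl⟩ _ ⟨v', hv', rfl⟩ hne
    exact hC v (hDC hv) v' (hDC hv') fun h => hne (congrArg Subtype.val h)
  · rw [card_map, ← ENat.natCast_le_natCast, ← hDfin.encard_eq_coe_toFinset_card, hD]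

theorem exists_isClique_encard_eq_cliqueNum (h : cliqueNum H m < ⊤) :
    ∃ C, IsClique H m C ∧ C.encard = cliqueNum H m := by
  have : Nonempty {C // IsClique H m C} := ⟨⟨∅, by simp [IsClique]⟩⟩
  rw [cliqueNum, iSup_subtype'] at h ⊢
  obtain ⟨⟨C, hC⟩, hCeq⟩ := ENat.exists_eq_iSup_of_lt_top h
  exact ⟨C, hC, hCeq⟩

theorem not_shattersTree_of_littlestoneDim_lt (h : littlestoneDim H < k) : ¬ ShattersTree H k :=
  fun hk => (le_iSup₂_of_le k hk le_rfl : (k : ℕ∞) ≤ littlestoneDim H).not_gt h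

end Shattering

section Numerics

theorem log_le_div_add_log_sub_one {x a : ℝ} (hx : 0 < x) (ha : 0 < a) :
    log x ≤ x / a + log a - 1 := by
  have := log_le_sub_one_of_pos (div_pos hx ha)
  rw [log_div hx.ne' ha.ne'] at this
  linarith

theorem add_one_mul_logb_le_of_le_31 {d x : ℝ} (hd : 0 ≤ d) (hd' : d ≤ 31) (hx : 301 ≤ x) :
    (d + 1) * logb 2 (2 * x + 1) ≤ x := by
  have hℓ := log_two_gt_d9
  have hℓ' := log_two_lt_d9
  -- tangent line of `log` at `2 ^ 9`
  have htangent := log_le_div_add_log_sub_one (by linarith : 0 < 2 * x + 1)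
    (by norm_num : (0 : ℝ) < 2 ^ 9)
  rw [log_pow] at htangent
  rw [logb, ← mul_div_assoc, div_le_iff₀ (by linarith)]
  nlinarith

theorem add_one_mul_logb_le_of_32_le {d x : ℝ} (hd : 32 ≤ d) (hx : 2 * d * logb 2 d < x) :
    (d + 1) * logb 2 (2 * x + 1) ≤ x := by
  have hℓ := log_two_gt_d9
  have hℓ' := log_two_lt_d9
  have hlogd : 5 * log 2 ≤ log d := by
    rw [← log_rpow two_pos]
    exact log_le_log (by norm_num) (by norm_num; linarith)
  have hxℓ : 2 * d * log d < x * log 2 := by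
    rwa [logb, ← mul_div_assoc, div_lt_iff₀ (by linarith)] at hx
  have hx0 : 0 < x := by nlinarith
  -- tangent line of `log` at `16 d`
  have htangent := log_le_div_add_log_sub_one (by linarith : 0 < 2 * x + 1)
    (by linarith : 0 < 2 ^ 4 * d)
  rw [log_mul (by norm_num) (by linarith), log_pow] at htangent
  have hfrac : (d + 1) * ((2 * x + 1) / (2 ^ 4 * d)) ≤ 33 / 512 * (2 * x + 1) := by
    rw [mul_div_assoc', div_le_iff₀ (by linarith)]
    nlinarith
  rw [logb, ← mul_div_assoc, div_le_iff₀ (by linarith)]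
  nlinarith [mul_le_mul_of_nonneg_left htangent (by linarith : (0 : ℝ) ≤ d + 1),
    mul_le_mul_of_nonneg_left hℓ.le hx0.le,
    mul_le_mul_of_nonneg_left hℓ'.le (by linarith : (0 : ℝ) ≤ d + 1),
    mul_nonneg (by linarith : (0 : ℝ) ≤ d - 32) (by linarith : (0 : ℝ) ≤ log d - 3.4657)]

theorem two_mul_add_one_pow_le_two_pow {m d : ℕ} (hm : 300 < m)
    (hmd : 2 * d * logb 2 d < m) : (2 * m + 1) ^ (d + 1) ≤ 2 ^ m := by
  have hlogb : ((d : ℝ) + 1) * logb 2 (2 * m + 1) ≤ m := by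
    rcases le_or_gt d 31 with hd | hd
    · exact add_one_mul_logb_le_of_le_31 d.cast_nonneg (by exact_mod_cast hd)
        (by exact_mod_cast hm)
    · exact add_one_mul_logb_le_of_32_le (by exact_mod_cast hd) hmd
  have : logb 2 (((2 * m + 1) ^ (d + 1) : ℕ) : ℝ) ≤ logb 2 ((2 ^ m : ℕ) : ℝ) := by
    push_cast
    rw [logb_pow, logb_pow, logb_self_eq_one one_lt_two]
    push_cast
    linarith
  exact_mod_cast (logb_le_logb one_lt_two (by positivity) (by positivity)).mp this

end Numerics

theorem cliqueDim_le_of_littlestoneDim_general {X : Type*}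
    (H : Set (X → Bool)) (d : ℕ)
    (hLD : littlestoneDim H = (d : ℕ∞)) :
    ∀ m : ℕ, cliqueNum H m = 2 ^ m →
      (m : ℝ) ≤ max (2 * d * Real.logb 2 d) 300 := by
  intro m hm
  by_contra! hlt
  obtain ⟨hmd, hm300⟩ := max_lt_iff.mp hlt
  replace hm300 : 300 < m := by exact_mod_cast hm300
  have hshatter : ¬ ShattersTree H (d + 1) :=
    not_shattersTree_of_littlestoneDim_lt (by rw [hLD]; exact_mod_cast d.lt_succ_self)
  have hfinite : cliqueNum H m < ⊤ :=
    hm ▸ ENat.pow_lt_top_iff.mpr (.inl (ENat.natCast_lt_top 2))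
  obtain ⟨C, hC, hCm⟩ := exists_isClique_encard_eq_cliqueNum hfinite
  have hlt := encard_lt_of_isClique (by omega) hshatter hC
  rw [hCm, hm] at hlt
  exact hlt.not_ge (by exact_mod_cast two_mul_add_one_pow_le_two_pow hm300 hmd)

/-- If `H` has finite Littlestone dimension `d = LD(H)`, then the clique
dimension satisfies `CD(H) ≤ max {2·d·log₂ d, 300}`; i.e., every `m` with `ω_m = 2^m`
satisfies `m ≤ max {2·d·log₂ d, 300}`. -/
theorem cliqueDim_le_of_littlestoneDim {X : Type*} [Countable X]
    (H : Set (X → Bool)) (hH : H.Nonempty) (d : ℕ)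
    (hLD : littlestoneDim H = (d : ℕ∞)) :
    ∀ m : ℕ, cliqueNum H m = 2 ^ m →
      (m : ℝ) ≤ max (2 * d * Real.logb 2 d) 300 :=
  cliqueDim_le_of_littlestoneDim_general H d hLD

end ContradictionGraph
end

section
/- Let m, k ∈ ℕ with m > log₂(4k/3). Suppose there exists a Borel probability measure P on ({0,1}^X)^k such that for every distribution D over labeled examples that is realizable by H, P({ (h_1,…,h_k) : L_D(h_i) ≤ 1/(2m) for some i ≤ k }) ≥ 3/4. Then the fractional clique number of G_m(H) satisfies ω*_m ≤ 4k/3 < 2^m; in particular the fractional clique dimension CD*(H) is finite. -/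
open MeasureTheory
open scoped ENNReal

namespace ContradictionGraph
variable {X : Type*} [MeasurableSpace X]

/-- The population loss `L_D(h) = Pr_{(x,y) ∼ D} [h(x) ≠ y]`. -/
noncomputable def popLoss (D : Measure (X × Bool)) (h : X → Bool) : ℝ≥0∞ :=
  D {p | h p.1 ≠ p.2}

/-- A distribution over labeled examples is realizable by `H` if `inf_{h ∈ H} L_D(h) = 0`. -/
def RealizableDist (H : Set (X → Bool)) (D : Measure (X × Bool)) : Prop :=
  (⨅ h ∈ H, popLoss D h) = 0

/-- `A` is an `(m, α, β)`-learner for `H`: for every realizable distribution `D`, the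
probability over `S ∼ D^m` and `h ∼ A(S)` that `L_D(h) > α` is less than `β`. -/
def IsLearner (H : Set (X → Bool)) (m : ℕ) (A : (Fin m → X × Bool) → Measure (X → Bool))
    (α β : ℝ) : Prop :=
  ∀ D : Measure (X × Bool), IsProbabilityMeasure D → RealizableDist H D →
    (∫⁻ S, A S {h | ENNReal.ofReal α < popLoss D h} ∂(Measure.pi fun _ : Fin m => D))
      < ENNReal.ofReal β

/-- Two datasets of size `m` are neighboring if they differ in at most a single example. -/
def Neighboring {m : ℕ} (S S' : Fin m → X × Bool) : Prop :=
  ∃ i : Fin m, ∀ j, j ≠ i → S j = S' j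

/-- `A` is `(ε, δ)`-differentially private: for all neighboring input datasets and every
(Borel) event `E`, `Pr[A(S) ∈ E] ≤ e^ε · Pr[A(S') ∈ E] + δ`. -/
def IsDP {m : ℕ} (A : (Fin m → X × Bool) → Measure (X → Bool)) (ε δ : ℝ) : Prop :=
  ∀ S S' : Fin m → X × Bool, Neighboring S S' → ∀ E : Set (X → Bool), MeasurableSet E →
    A S E ≤ ENNReal.ofReal (Real.exp ε) * A S' E + ENNReal.ofReal δ

/-- `H` is approximately differentially privately PAC learnable. -/
def ApproxDPLearnable (H : Set (X → Bool)) : Prop :=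
  ∃ ε₀ : ℝ, 0 < ε₀ ∧ ∃ α β δ : ℕ → ℝ,
    Filter.Tendsto α Filter.atTop (nhds 0) ∧
    Filter.Tendsto β Filter.atTop (nhds 0) ∧
    (∀ m, 0 ≤ δ m) ∧
    (∀ c : ℝ, 0 < c → Filter.Tendsto (fun m : ℕ => (m : ℝ) ^ c * δ m) Filter.atTop (nhds 0)) ∧
    ∃ A : (m : ℕ) → (Fin m → X × Bool) → Measure (X → Bool),
      (∀ m S, IsProbabilityMeasure (A m S)) ∧
      (∀ m, IsDP (A m) ε₀ (δ m)) ∧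
      (∀ m, IsLearner H m (A m) (α m) (β m))

/-- `H` is pure differentially privately PAC learnable. -/
def PureDPLearnable (H : Set (X → Bool)) : Prop :=
  ∃ ε₀ : ℝ, 0 < ε₀ ∧ ∃ α β : ℕ → ℝ,
    Filter.Tendsto α Filter.atTop (nhds 0) ∧
    Filter.Tendsto β Filter.atTop (nhds 0) ∧
    ∃ A : (m : ℕ) → (Fin m → X × Bool) → Measure (X → Bool),
      (∀ m S, IsProbabilityMeasure (A m S)) ∧
      (∀ m, IsDP (A m) ε₀ 0) ∧
      (∀ m, IsLearner H m (A m) (α m) (β m))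

end ContradictionGraph

/-!
For a random hypothesis `g`, the realizable datasets consistent with a fixed value of `g` form an
independent set of `G_n(H)`, so every fractional clique `δ` satisfies
`∑ S, δ S * Pr[g is consistent with S] ≤ 1`. Feeding the empirical distribution of a realizable
dataset `S` of size `m` to the representation `P`, some of its `k` hypotheses is consistent with
`S` with probability at least `3/4`; hence `(3/4) ω*_m ≤ k`.

For datasets `S` of size `n ≫ m`, with probability `3/4` some hypothesis drawn from `P` makes at
most `n / (2m)` mistakes on `S`; flipping each of its labels independently with probability `1/4`
repairs them all with probability at least `(3/4)^n 3^(-n/(2m))`. For `m ≥ 2`, which holds as soon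
as `k ≥ 2`, this gives `ω*_n < 2^n` for all large `n`. For `k ≤ 1` a single random hypothesis
would be right with probability `3/4` both on `(x, 0)` and on `(x, 1)` if two members of `H`
disagreed at `x`; so `H` has at most one element and `ω*_n ≤ 1`.
-/

namespace ContradictionGraph

open scoped Finset

variable {X : Type*} {n : ℕ}

section FractionalClique

variable {H : Set (X → Bool)}

lemma Consistent.not_contradicts {h : X → Bool} {S S' : Fin n → X × Bool}
    (hS : Consistent h S) (hS' : Consistent h S') : ¬ Contradicts S S' := by
  rintro ⟨x, ⟨⟨i, hi⟩, ⟨j, hj⟩⟩ | ⟨⟨i, hi⟩, ⟨j, hj⟩⟩⟩ <;>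
  · have h₁ := hS i
    have h₂ := hS' j
    simp only [hi, hj] at h₁ h₂
    simp [h₁] at h₂

lemma isIndep_setOf_consistent (h : X → Bool) : IsIndep H n {S | Consistent h S.1} :=
  fun _ hS _ hS' _ => hS.not_contradicts hS'

lemma measurableSet_setOf_consistent {Ω : Type*} [MeasurableSpace Ω] {g : Ω → X → Bool}
    (hg : ∀ x, Measurable fun ω => g ω x) (S : Fin n → X × Bool) :
    MeasurableSet {ω | Consistent (g ω) S} := by
  simp only [Consistent, Set.ofPred_forall]
  exact .iInter fun i => hg (S i).1 (measurableSet_singleton _)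

lemma IsFracClique.tsum_mul_measure_consistent_le {δ : Vm H n → ℝ≥0∞} (hδ : IsFracClique H n δ)
    {Ω : Type*} [MeasurableSpace Ω] (μ : Measure Ω) {g : Ω → X → Bool}
    (hg : ∀ x, Measurable fun ω => g ω x) :
    ∑' S, δ S * μ {ω | Consistent (g ω) S.1} ≤ μ Set.univ := by
  rw [ENNReal.tsum_eq_iSup_sum]
  refine iSup_le fun F => ?_
  have hmeas (S : Vm H n) := measurableSet_setOf_consistent hg S.1
  calc ∑ S ∈ F, δ S * μ {ω | Consistent (g ω) S.1}
      = ∫⁻ ω, ∑ S ∈ F, {ω | Consistent (g ω) S.1}.indicator (fun _ => δ S) ω ∂μ := by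
        rw [lintegral_finsetSum _ fun S _ => measurable_const.indicator (hmeas S)]
        simp only [lintegral_indicator_const (hmeas _)]
    _ ≤ ∫⁻ _, 1 ∂μ := lintegral_mono fun ω =>
        calc ∑ S ∈ F, {ω | Consistent (g ω) S.1}.indicator (fun _ => δ S) ω
            = ∑ S ∈ F, {S : Vm H n | Consistent (g ω) S.1}.indicator δ S := rfl
          _ ≤ ∑' S : {S : Vm H n | Consistent (g ω) S.1}, δ S := by
              rw [tsum_subtype]
              exact ENNReal.sum_le_tsum F
          _ ≤ 1 := hδ _ (isIndep_setOf_consistent (g ω))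
    _ = μ Set.univ := by simp

lemma mul_fracCliqueNum_le_of_cover {Ω : Type*} [MeasurableSpace Ω] (μ : Measure Ω)
    [IsProbabilityMeasure μ] {k : ℕ} {G : Fin k → Ω → X → Bool}
    (hG : ∀ i x, Measurable fun ω => G i ω x) {c : ℝ≥0∞}
    (hc : ∀ S : Vm H n, c ≤ ∑ i, μ {ω | Consistent (G i ω) S.1}) :
    c * fracCliqueNum H n ≤ k := by
  simp only [fracCliqueNum, ENNReal.mul_iSup, iSup_le_iff]
  intro δ hδ
  calc c * ∑' S, δ S = ∑' S, δ S * c := by rw [ENNReal.tsum_mul_right, mul_comm]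
    _ ≤ ∑' S, δ S * ∑ i, μ {ω | Consistent (G i ω) S.1} := by gcongr with S; exact hc S
    _ = ∑ i, ∑' S, δ S * μ {ω | Consistent (G i ω) S.1} := by
        simp_rw [Finset.mul_sum]
        exact Summable.tsum_finsetSum fun i _ => ENNReal.summable
    _ ≤ ∑ _i : Fin k, μ Set.univ :=
        Finset.sum_le_sum fun i _ => hδ.tsum_mul_measure_consistent_le μ (hG i)
    _ = k := by simp

lemma fracCliqueNum_le_one_of_subsingleton (hH : H.Subsingleton) : fracCliqueNum H n ≤ 1 := by
  refine iSup₂_le fun δ hδ => ?_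
  have hindep : IsIndep H n Set.univ := fun S _ S' _ _ => by
    obtain ⟨h, hh, hS⟩ := S.2
    obtain ⟨h', hh', hS'⟩ := S'.2
    exact hS.not_contradicts (hH hh' hh ▸ hS')
  simpa [tsum_univ] using hδ _ hindep

lemma fracCliqueDim_le_of_lt {N : ℕ} (h : ∀ n, N < n → fracCliqueNum H n < 2 ^ n) :
    fracCliqueDim H ≤ N :=
  iSup₂_le fun n hn => by
    by_contra hlt
    exact (h n (by exact_mod_cast not_le.mp hlt)).ne hn

end FractionalClique

section Empirical

def mistakes (h : X → Bool) (S : Fin n → X × Bool) : Finset (Fin n) :=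
  {j | h (S j).1 ≠ (S j).2}

lemma mistakes_eq_empty_iff {h : X → Bool} {S : Fin n → X × Bool} :
    mistakes h S = ∅ ↔ Consistent h S := by
  simp [mistakes, Finset.filter_eq_empty_iff, Consistent]

lemma consistent_of_card_mistakes_mul_le {m : ℕ} {S : Fin n → X × Bool} {h : X → Bool}
    (hnm : n < 2 * m) (hh : #(mistakes h S) * (2 * m) ≤ n) : Consistent h S :=
  mistakes_eq_empty_iff.1 <| Finset.card_eq_zero.1 <| Nat.lt_one_iff.1 <|
    Nat.lt_of_mul_lt_mul_right (a := 2 * m) (by omega)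

variable [MeasurableSpace X] [MeasurableSingletonClass X]

noncomputable def empiricalMeasure (S : Fin n → X × Bool) : Measure (X × Bool) :=
  (n : ℝ≥0∞)⁻¹ • ∑ j, Measure.dirac (S j)

lemma empiricalMeasure_apply (S : Fin n → X × Bool) (s : Set (X × Bool))
    [DecidablePred (· ∈ s)] : empiricalMeasure S s = (n : ℝ≥0∞)⁻¹ * #{j | S j ∈ s} := by
  simp [empiricalMeasure, Measure.dirac_apply, Set.indicator_apply, Finset.sum_boole]

lemma isProbabilityMeasure_empiricalMeasure (hn : n ≠ 0) (S : Fin n → X × Bool) :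
    IsProbabilityMeasure (empiricalMeasure S) :=
  ⟨by classical simp [empiricalMeasure_apply, ENNReal.inv_mul_cancel, hn]⟩

lemma popLoss_empiricalMeasure (S : Fin n → X × Bool) (h : X → Bool) :
    popLoss (empiricalMeasure S) h = (n : ℝ≥0∞)⁻¹ * #(mistakes h S) := by
  classical
  rw [popLoss, empiricalMeasure_apply, mistakes]
  congr

lemma Realizable.realizableDist_empiricalMeasure {H : Set (X → Bool)} {S : Fin n → X × Bool}
    (hS : Realizable H S) : RealizableDist H (empiricalMeasure S) := by
  obtain ⟨h, hH, hh⟩ := hS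
  refine le_antisymm (iInf₂_le_of_le h hH ?_) bot_le
  simp [popLoss_empiricalMeasure, mistakes_eq_empty_iff.mpr hh]

lemma card_mistakes_mul_le {m : ℕ} {S : Fin n → X × Bool} {h : X → Bool}
    (hh : popLoss (empiricalMeasure S) h ≤ ENNReal.ofReal (1 / (2 * m))) :
    #(mistakes h S) * (2 * m) ≤ n := by
  rcases Nat.eq_zero_or_pos m with rfl | hm
  · simp
  rcases Nat.eq_zero_or_pos n with rfl | hn
  · simp [mistakes]
  have hthr : ENNReal.ofReal (1 / (2 * m)) = ((2 * m : ℕ) : ℝ≥0∞)⁻¹ := by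
    rw [one_div, ENNReal.ofReal_inv_of_pos (by positivity)]
    norm_cast
  rw [popLoss_empiricalMeasure, hthr, ← ENNReal.div_eq_inv_mul,
    ENNReal.div_le_iff (by positivity) (by simp), ← ENNReal.div_eq_inv_mul,
    ENNReal.le_div_iff_mul_le (by simp; omega) (by simp)] at hh
  exact_mod_cast hh

end Empirical

section RandomFlips

noncomputable def flipCoin : Measure Bool :=
  (4 : ℝ≥0∞)⁻¹ • Measure.dirac true + (3 / 4 : ℝ≥0∞) • Measure.dirac false

lemma flipCoin_singleton (b : Bool) : flipCoin {b} = 3 / 4 * if b then 3⁻¹ else 1 := by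
  cases b
  · simp [flipCoin]
  · simp only [flipCoin, Measure.add_apply, Measure.smul_apply, smul_eq_mul, if_true,
      Measure.dirac_apply, Set.mem_singleton_iff, Set.indicator_of_mem, Set.indicator_of_notMem,
      Bool.false_eq_true, not_false_eq_true, Pi.one_apply, mul_one, mul_zero, add_zero]
    rw [ENNReal.div_eq_inv_mul, mul_assoc, ENNReal.mul_inv_cancel (by norm_num) (by norm_num),
      mul_one]

instance : IsProbabilityMeasure flipCoin := by
  constructor
  simp only [flipCoin, Measure.add_apply, Measure.smul_apply, measure_univ, smul_eq_mul, mul_one]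
  rw [← one_div, ENNReal.div_add_div_same, show (1 + 3 : ℝ≥0∞) = 4 by norm_num,
    ENNReal.div_self (by norm_num) (by norm_num)]

noncomputable def flipMeasure (X : Type*) : Measure (X → Bool) :=
  Measure.infinitePi fun _ : X => flipCoin

instance : IsProbabilityMeasure (flipMeasure X) := by
  unfold flipMeasure; infer_instance

lemma flipMeasure_setOf_forall_mem_eq (s : Finset X) (b : X → Bool) :
    flipMeasure X {ε | ∀ x ∈ s, ε x = b x} = (3 / 4) ^ #s * 3⁻¹ ^ #{x ∈ s | b x} := by
  have hbox : {ε : X → Bool | ∀ x ∈ s, ε x = b x} = Set.pi s fun x => {b x} := by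
    ext ε; simp
  rw [hbox, flipMeasure, Measure.infinitePi_pi _ fun x _ => measurableSet_singleton _]
  simp only [flipCoin_singleton, Finset.prod_mul_distrib, Finset.prod_const, Finset.prod_ite,
    one_pow, mul_one]

lemma le_flipMeasure_consistent_xor {hstar : X → Bool} {S : Fin n → X × Bool}
    (hS : Consistent hstar S) (h : X → Bool) :
    (3 / 4) ^ n * 3⁻¹ ^ #(mistakes h S) ≤
      flipMeasure X {ε | Consistent (fun x => xor (h x) (ε x)) S} := by
  classical
  set pts := Finset.univ.image fun j => (S j).1
  have hflips : #{x ∈ pts | xor (h x) (hstar x)} ≤ #(mistakes h S) := by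
    refine (Finset.card_le_card fun x hx => ?_).trans
      (Finset.card_image_le (f := fun j => (S j).1))
    obtain ⟨hx, hne⟩ := Finset.mem_filter.1 hx
    obtain ⟨j, -, rfl⟩ := Finset.mem_image.1 hx
    refine Finset.mem_image.2 ⟨j, Finset.mem_filter.2 ⟨Finset.mem_univ j, ?_⟩, rfl⟩
    rw [← hS j]
    simpa using hne
  -- flip exactly the points of `S` where `h` and `hstar` disagree
  calc (3 / 4) ^ n * 3⁻¹ ^ #(mistakes h S)
      ≤ (3 / 4) ^ #pts * 3⁻¹ ^ #{x ∈ pts | xor (h x) (hstar x)} := by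
        refine mul_le_mul' (pow_le_pow_of_le_one zero_le ?_ ?_)
          (pow_le_pow_of_le_one zero_le (ENNReal.inv_le_one.2 (by norm_num)) hflips)
        · rw [ENNReal.div_le_iff (by norm_num) (by norm_num)]
          norm_num
        · exact Finset.card_image_le.trans (by simp)
    _ = flipMeasure X {ε | ∀ x ∈ pts, ε x = xor (h x) (hstar x)} :=
        (flipMeasure_setOf_forall_mem_eq _ _).symm
    _ ≤ flipMeasure X {ε | Consistent (fun x => xor (h x) (ε x)) S} := by
        refine measure_mono fun ε hε j => ?_
        simp [hε (S j).1 (Finset.mem_image_of_mem _ (Finset.mem_univ j)), hS j]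

lemma measurable_xor_apply {Ω : Type*} [MeasurableSpace Ω] {f : Ω → X → Bool}
    (hf : ∀ x, Measurable fun ω => f ω x) (x : X) :
    Measurable fun p : Ω × (X → Bool) => xor (f p.1 x) (p.2 x) :=
  (measurable_of_finite fun b : Bool × Bool => xor b.1 b.2).comp
    (((hf x).comp measurable_fst).prodMk ((measurable_pi_apply x).comp measurable_snd))

lemma mul_measure_le_prod_flipMeasure {Ω : Type*} [MeasurableSpace Ω] (P : Measure Ω)
    {f : Ω → X → Bool} (hf : ∀ x, Measurable fun ω => f ω x) {hstar : X → Bool}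
    {S : Fin n → X × Bool} (hS : Consistent hstar S) (w : ℕ) :
    (3 / 4) ^ n * 3⁻¹ ^ w * P {ω | #(mistakes (f ω) S) ≤ w} ≤
      P.prod (flipMeasure X) {p | Consistent (fun x => xor (f p.1 x) (p.2 x)) S} := by
  have hmeas := measurableSet_setOf_consistent (measurable_xor_apply hf) S
  rw [Measure.prod_apply hmeas]
  refine (mul_le_mul_right (measure_mono fun ω hω => ?_) _).trans
    (mul_meas_ge_le_lintegral₀ (measurable_measure_prodMk_left hmeas).aemeasurable _)
  exact le_trans (mul_le_mul_right
      (pow_le_pow_of_le_one zero_le (ENNReal.inv_le_one.2 (by norm_num)) hω) _)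
    (le_flipMeasure_consistent_xor hS (f ω))

end RandomFlips

lemma mul_two_pow_mul_three_pow_lt {k w : ℕ} (hw : 4 * w ≤ n) (hn : 8 * k + 24 ≤ n) :
    k * 2 ^ (n + 2) * 3 ^ w < 3 ^ (n + 1) := by
  obtain ⟨q, r, hr, rfl⟩ : ∃ q r, r < 8 ∧ n = 8 * q + r :=
    ⟨n / 8, n % 8, Nat.mod_lt _ (by norm_num), (Nat.div_add_mod n 8).symm⟩
  have hk : 4 * k < 2 ^ q :=
    calc 4 * k < 2 ^ 2 * 2 ^ k := by have := k.lt_two_pow_self; omega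
      _ ≤ 2 ^ q := by rw [← pow_add]; exact Nat.pow_le_pow_right (by norm_num) (by omega)
  -- each block of 8 points gains the factor `3 ^ 8 / (2 ^ 8 * 3 ^ 2) ≥ 2`
  have h29 : (2 ^ q) ^ 9 ≤ (3 ^ q) ^ 6 := by
    rw [← pow_mul, ← pow_mul, mul_comm q, mul_comm q, pow_mul, pow_mul]
    exact Nat.pow_le_pow_left (by norm_num) q
  calc k * 2 ^ (8 * q + r + 2) * 3 ^ w
      ≤ k * 2 ^ (8 * q + r + 2) * 3 ^ (2 * q + 1) := by gcongr <;> omega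
    _ = 4 * k * (2 ^ q) ^ 8 * 2 ^ r * 3 * (3 ^ q) ^ 2 := by ring
    _ < 2 ^ q * (2 ^ q) ^ 8 * 2 ^ r * 3 * (3 ^ q) ^ 2 := by gcongr
    _ = (2 ^ q) ^ 9 * 2 ^ r * 3 * (3 ^ q) ^ 2 := by ring
    _ ≤ (3 ^ q) ^ 6 * 3 ^ r * 3 * (3 ^ q) ^ 2 := by gcongr; norm_num
    _ = 3 ^ (8 * q + r + 1) := by ring

lemma natCast_lt_mul_two_pow {k w : ℕ} (hw : 4 * w ≤ n) (hn : 8 * k + 24 ≤ n) :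
    (k : ℝ≥0∞) < (3 / 4) ^ (n + 1) * 3⁻¹ ^ w * 2 ^ n := by
  have h4 : (4 : ℝ≥0∞) ^ (n + 1) = 2 ^ n * 2 ^ (n + 2) := by
    rw [← pow_add, show (4 : ℝ≥0∞) = 2 ^ 2 by norm_num, ← pow_mul]
    ring_nf
  have hcancel : (3 / 4 : ℝ≥0∞) ^ (n + 1) * 3⁻¹ ^ w * 2 ^ n * (2 ^ (n + 2) * 3 ^ w) =
      3 ^ (n + 1) :=
    calc (3 / 4 : ℝ≥0∞) ^ (n + 1) * 3⁻¹ ^ w * 2 ^ n * (2 ^ (n + 2) * 3 ^ w)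
        = (3 / 4 * 4) ^ (n + 1) * (3⁻¹ * 3) ^ w := by rw [mul_pow, mul_pow, h4]; ring
      _ = 3 ^ (n + 1) := by
        rw [ENNReal.div_mul_cancel (by norm_num) (by norm_num),
          ENNReal.inv_mul_cancel (by norm_num) (by norm_num), one_pow, mul_one]
  have hnat : (k : ℝ≥0∞) * (2 ^ (n + 2) * 3 ^ w) < 3 ^ (n + 1) := by
    rw [← mul_assoc]
    exact_mod_cast mul_two_pow_mul_three_pow_lt hw hn
  by_contra! hle
  exact (hnat.trans_le (hcancel ▸ mul_le_mul_left hle _)).false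

section Representation

variable [MeasurableSpace X] [MeasurableSingletonClass X]

/-- `P` is a `(3/4, 1/(2m))`-probabilistic representation of `H` by `k` hypotheses. -/
def IsProbRepresentation (H : Set (X → Bool)) (m k : ℕ) (P : Measure (Fin k → X → Bool)) :
    Prop :=
  ∀ D : Measure (X × Bool), IsProbabilityMeasure D → RealizableDist H D →
    (3 / 4 : ℝ≥0∞) ≤ P {hs | ∃ i : Fin k, popLoss D (hs i) ≤ ENNReal.ofReal (1 / (2 * m))}

variable {H : Set (X → Bool)} {m k : ℕ} {P : Measure (Fin k → X → Bool)}

lemma IsProbRepresentation.three_quarters_le_sum (hP : IsProbRepresentation H m k P)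
    (hn : n ≠ 0) (S : Vm H n) :
    3 / 4 ≤ ∑ i, P {hs | #(mistakes (hs i) S.1) * (2 * m) ≤ n} := by
  have := isProbabilityMeasure_empiricalMeasure hn S.1
  calc 3 / 4
      ≤ P {hs | ∃ i, popLoss (empiricalMeasure S.1) (hs i) ≤ ENNReal.ofReal (1 / (2 * m))} :=
        hP _ this S.2.realizableDist_empiricalMeasure
    _ ≤ P (⋃ i, {hs | #(mistakes (hs i) S.1) * (2 * m) ≤ n}) :=
        measure_mono fun _ ⟨i, hi⟩ => Set.mem_iUnion.2 ⟨i, card_mistakes_mul_le hi⟩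
    _ ≤ _ := measure_iUnion_fintype_le _ _

lemma IsProbRepresentation.three_quarters_le_sum_consistent (hP : IsProbRepresentation H m k P)
    (hn : n ≠ 0) (hnm : n < 2 * m) (S : Vm H n) :
    3 / 4 ≤ ∑ i, P {hs | Consistent (hs i) S.1} :=
  (hP.three_quarters_le_sum hn S).trans <| Finset.sum_le_sum fun _ _ =>
    measure_mono fun _ => consistent_of_card_mistakes_mul_le hnm

lemma IsProbRepresentation.fracCliqueNum_le (hP : IsProbRepresentation H m k P)
    [IsProbabilityMeasure P] (hm : m ≠ 0) : fracCliqueNum H m ≤ ENNReal.ofReal (4 * k / 3) := by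
  have hcover : 3 / 4 * fracCliqueNum H m ≤ k :=
    mul_fracCliqueNum_le_of_cover P (G := fun i hs => hs i) (fun _ _ => by fun_prop)
      (hP.three_quarters_le_sum_consistent hm (by omega))
  have hthr : ENNReal.ofReal (4 * k / 3) = k / (3 / 4) := by
    rw [← ENNReal.ofReal_natCast, ← ENNReal.ofReal_ofNat 3, ← ENNReal.ofReal_ofNat 4,
      ← ENNReal.ofReal_div_of_pos (by norm_num), ← ENNReal.ofReal_div_of_pos (by norm_num)]
    congr 1
    ring
  rw [hthr, ENNReal.le_div_iff_mul_le (by norm_num) (by norm_num), mul_comm]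
  exact hcover

lemma IsProbRepresentation.subsingleton (hP : IsProbRepresentation H m k P)
    [IsProbabilityMeasure P] (hm : m ≠ 0) (hk : k ≤ 1) : H.Subsingleton := by
  intro h hh h' hh'
  funext x
  by_contra hne
  have hrealizable (b : Bool) : Realizable H fun _ : Fin 1 => (x, b) := by
    rcases Bool.eq_or_eq_not b (h x) with rfl | rfl
    · exact ⟨h, hh, fun _ => rfl⟩
    · exact ⟨h', hh', fun _ => Bool.eq_not_of_ne (Ne.symm hne)⟩
  have hcover (b : Bool) : 3 / 4 ≤ ∑ i, P {hs | hs i x = b} := by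
    simpa [Consistent] using
      hP.three_quarters_le_sum_consistent one_ne_zero (by omega) ⟨_, hrealizable b⟩
  have hfiber (i : Fin k) : ∑ b, P {hs | hs i x = b} = 1 :=
    (sum_measure_preimage_singleton (μ := P) Finset.univ (f := fun hs => hs i x)
      fun b _ => (measurableSet_singleton b).preimage (by fun_prop)).trans
        (by rw [Finset.coe_univ, Set.preimage_univ, measure_univ])
  have hle : (3 / 4 + 3 / 4 : ℝ≥0∞) ≤ 1 :=
    calc (3 / 4 + 3 / 4 : ℝ≥0∞) ≤ ∑ b, ∑ i, P {hs | hs i x = b} := by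
          rw [Fintype.sum_bool]
          exact add_le_add (hcover true) (hcover false)
      _ = k := by rw [Finset.sum_comm]; simp only [hfiber]; simp
      _ ≤ 1 := by exact_mod_cast hk
  refine hle.not_gt ?_
  rw [ENNReal.div_add_div_same, ENNReal.lt_div_iff_mul_lt (by norm_num) (by norm_num)]
  norm_num

lemma IsProbRepresentation.mul_fracCliqueNum_le (hP : IsProbRepresentation H m k P)
    [IsProbabilityMeasure P] (hm : m ≠ 0) (hn : n ≠ 0) :
    (3 / 4) ^ (n + 1) * 3⁻¹ ^ (n / (2 * m)) * fracCliqueNum H n ≤ k := by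
  refine mul_fracCliqueNum_le_of_cover (P.prod (flipMeasure X))
    (G := fun i p x => xor (p.1 i x) (p.2 x))
    (fun i => measurable_xor_apply (f := fun hs : Fin k → X → Bool => hs i) fun _ => by fun_prop)
    fun S => ?_
  obtain ⟨hstar, -, hS⟩ := S.2
  set c := (3 / 4 : ℝ≥0∞) ^ n * 3⁻¹ ^ (n / (2 * m))
  calc (3 / 4) ^ (n + 1) * 3⁻¹ ^ (n / (2 * m)) = c * (3 / 4) := by ring
    _ ≤ c * ∑ i, P {hs | #(mistakes (hs i) S.1) * (2 * m) ≤ n} := by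
        gcongr; exact hP.three_quarters_le_sum hn S
    _ ≤ ∑ i, c * P {hs | #(mistakes (hs i) S.1) ≤ n / (2 * m)} := by
        rw [Finset.mul_sum]
        exact Finset.sum_le_sum fun i _ => mul_le_mul_right (measure_mono fun hs hhs =>
          (Nat.le_div_iff_mul_le (by omega)).2 hhs) c
    _ ≤ _ := Finset.sum_le_sum fun i _ =>
        mul_measure_le_prod_flipMeasure P (fun x => by fun_prop) hS _

lemma IsProbRepresentation.fracCliqueNum_lt_two_pow (hP : IsProbRepresentation H m k P)
    [IsProbabilityMeasure P] (hm : 2 ≤ m) (hn : 8 * k + 24 ≤ n) : fracCliqueNum H n < 2 ^ n := by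
  have hw : 4 * (n / (2 * m)) ≤ n :=
    (Nat.mul_le_mul_left 4 (Nat.div_le_div_left (by omega) (by norm_num))).trans
      (Nat.mul_div_le n 4)
  by_contra! hle
  exact (natCast_lt_mul_two_pow hw hn).not_ge <|
    (mul_le_mul_right hle _).trans (hP.mul_fracCliqueNum_le (by omega) (by omega))

end Representation

lemma pos_of_logb_lt {k m : ℕ} (hm : Real.logb 2 (4 * k / 3) < m) : 0 < m := by
  have hlog : 0 ≤ Real.logb 2 (4 * k / 3) := by
    rcases k.eq_zero_or_pos with rfl | hk
    · simp
    · exact Real.logb_nonneg one_lt_two (by rw [le_div_iff₀ (by norm_num)]; norm_cast; omega)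
  exact_mod_cast hlog.trans_lt hm

lemma lt_two_pow_of_logb_lt {k m : ℕ} (hm : Real.logb 2 (4 * k / 3) < m) :
    (4 * k / 3 : ℝ) < 2 ^ m := by
  rcases k.eq_zero_or_pos with rfl | hk
  · simp
  · rw [← Real.rpow_natCast]
    exact (Real.logb_lt_iff_lt_rpow one_lt_two (by positivity)).1 hm

lemma ofReal_lt_two_pow_of_logb_lt {k m : ℕ} (hm : Real.logb 2 (4 * k / 3) < m) :
    ENNReal.ofReal (4 * k / 3) < 2 ^ m := by
  rw [← ENNReal.ofReal_ofNat 2, ← ENNReal.ofReal_pow zero_le_two]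
  exact (ENNReal.ofReal_lt_ofReal_iff (by positivity)).2 (lt_two_pow_of_logb_lt hm)

lemma two_le_of_logb_lt {k m : ℕ} (hk : 2 ≤ k) (hm : Real.logb 2 (4 * k / 3) < m) : 2 ≤ m := by
  have hlt := lt_two_pow_of_logb_lt hm
  have hk' : (2 : ℝ) ≤ k := by exact_mod_cast hk
  by_contra! hm₁
  interval_cases m <;> norm_num at hlt <;> linarith

end ContradictionGraph

namespace ContradictionGraph

theorem representation_implies_fracCliqueDim_finite_general {X : Type*}
    [MeasurableSpace X] [MeasurableSingletonClass X]
    (H : Set (X → Bool)) (m k : ℕ)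
    (hm : Real.logb 2 (4 * k / 3) < m)
    (P : Measure (Fin k → X → Bool)) (hP : IsProbabilityMeasure P)
    (hgood : ∀ D : Measure (X × Bool), IsProbabilityMeasure D → RealizableDist H D →
      (3 / 4 : ℝ≥0∞) ≤ P {hs | ∃ i : Fin k, popLoss D (hs i) ≤ ENNReal.ofReal (1 / (2 * m))}) :
    fracCliqueNum H m ≤ ENNReal.ofReal (4 * k / 3) ∧
    ENNReal.ofReal (4 * k / 3) < 2 ^ m ∧
    fracCliqueDim H ≠ ⊤ := by
  have hrep : IsProbRepresentation H m k P := hgood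
  have hm₀ : m ≠ 0 := (pos_of_logb_lt hm).ne'
  refine ⟨hrep.fracCliqueNum_le hm₀, ofReal_lt_two_pow_of_logb_lt hm, ?_⟩
  rcases le_or_gt k 1 with hk | hk
  · have hH := hrep.subsingleton hm₀ hk
    exact ne_top_of_le_ne_top (ENat.natCast_ne_top 0) <| fracCliqueDim_le_of_lt fun n hn =>
      (fracCliqueNum_le_one_of_subsingleton hH).trans_lt (one_lt_pow₀ ENNReal.one_lt_two (by omega))
  · have hm₂ := two_le_of_logb_lt hk hm
    exact ne_top_of_le_ne_top (ENat.natCast_ne_top (8 * k + 23)) <| fracCliqueDim_le_of_lt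
      fun n hn => hrep.fracCliqueNum_lt_two_pow hm₂ (by omega)

/-- Let `m, k ∈ ℕ` with `m > log₂(4k/3)`. If there is a (Borel) probability
measure `P` on `({0,1}^X)^k` such that for every distribution `D` realizable by `H`, with
probability at least `3/4` over `(h_1,…,h_k) ∼ P` some `h_i` satisfies `L_D(h_i) ≤ 1/(2m)`,
then the fractional clique number of `G_m(H)` satisfies `ω*_m ≤ 4k/3 < 2^m`; in particular the
fractional clique dimension `CD*(H)` is finite. -/
theorem representation_implies_fracCliqueDim_finite {X : Type*} [Countable X]
    [MeasurableSpace X] [MeasurableSingletonClass X]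
    (H : Set (X → Bool)) (hH : H.Nonempty) (m k : ℕ)
    (hm : Real.logb 2 (4 * k / 3) < m)
    (P : Measure (Fin k → X → Bool)) (hP : IsProbabilityMeasure P)
    (hgood : ∀ D : Measure (X × Bool), IsProbabilityMeasure D → RealizableDist H D →
      (3 / 4 : ℝ≥0∞) ≤ P {hs | ∃ i : Fin k, popLoss D (hs i) ≤ ENNReal.ofReal (1 / (2 * m))}) :
    fracCliqueNum H m ≤ ENNReal.ofReal (4 * k / 3) ∧
    ENNReal.ofReal (4 * k / 3) < 2 ^ m ∧
    fracCliqueDim H ≠ ⊤ :=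
  representation_implies_fracCliqueDim_finite_general H m k hm P hP hgood

end ContradictionGraph
end
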